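/- arXiv:2005.13499 — 2 statements merged into one kernel-verified Lean document; each statement's English description precedes it below -/
import Mathlib

section
/- Let h and h' be histories in a family H of finite chains totally ordered by containment, and let C be a configuration that is the maximum element of some history in H. If C ⊑ max(h), then C ∈ h. -/
/-- If a pivotal configuration `C` (the greatest element of some history in `H`)
satisfies `C ⊑ max(h)` for a history `h ∈ H`, then `C ∈ h`. -/
theorem pivotal_mem_of_le_max {Conf : Type*} [PartialOrder Conf]
    (H : Set (Finset Conf))
    (hcomp : ∀ h₁ ∈ H, ∀ h₂ ∈ H, h₁ ⊆ h₂ ∨ h₂ ⊆ h₁)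
    (C : Conf) (h' : Finset Conf) (hh' : h' ∈ H)
    (hCmem : C ∈ h') (hCmax : ∀ x ∈ h', x ≤ C)
    (h : Finset Conf) (hh : h ∈ H)
    (m : Conf) (hmmem : m ∈ h) (hmmax : ∀ x ∈ h, x ≤ m)
    (hCm : C ≤ m) :
    C ∈ h := by
  rcases hcomp h' hh' h hh with hsub | hsub
  · exact hsub hCmem
  · have : C = m := le_antisymm hCm (hCmax m (hsub hmmem))
    exact this ▸ hmmem
end

section
/- In a chain-ordered finite set of configurations, the least properly installed configuration strictly greater than C equals the first (in installation-time order) installed configuration strictly greater than C. -/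
/-- The ⊑-least properly installed configuration strictly above `C` is the first
installed configuration strictly above `C` in installation-time order. -/
theorem least_properly_installed_is_first {Conf : Type*} [PartialOrder Conf]
    (installed : Set Conf) (hfin : installed.Finite)
    (t : Conf → ℕ)
    (hchain : ∀ D ∈ installed, ∀ E ∈ installed, D ≤ E ∨ E ≤ D)
    (htimes : ∀ D ∈ installed, ∀ E ∈ installed, t D = t E → D = E)
    (properly : Conf → Prop)
    (hproperly : ∀ D, properly D ↔ D ∈ installed ∧ ∀ E ∈ installed, D < E → t D < t E)
    (C N : Conf) (hN : properly N) (hCN : C < N)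
    (hleast : ∀ D, properly D → C < D → N ≤ D) :
    ∀ E ∈ installed, C < E → t N ≤ t E := by
  intro E hE hCE
  -- Let S be the set of installed configs strictly above C
  set S : Set Conf := {D | D ∈ installed ∧ C < D} with hS
  have hSfin : S.Finite := hfin.subset (fun D hD => hD.1)
  have hSne : S.Nonempty := ⟨E, hE, hCE⟩
  obtain ⟨M, hMS, hMmin⟩ := Set.exists_min_image S t hSfin hSne
  have hMprop : properly M := by
    rw [hproperly]
    refine ⟨hMS.1, fun F hF hMF => ?_⟩
    have hFS : F ∈ S := ⟨hF, hMS.2.trans hMF⟩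
    have hle := hMmin F hFS
    rcases lt_or_eq_of_le hle with h | h
    · exact h
    · exact absurd (htimes M hMS.1 F hF h) (ne_of_lt hMF)
  have hNM : N ≤ M := hleast M hMprop hMS.2
  have hNin : N ∈ installed := ((hproperly N).mp hN).1
  have htNM : t N ≤ t M := by
    rcases lt_or_eq_of_le hNM with h | h
    · exact le_of_lt (((hproperly N).mp hN).2 M hMS.1 h)
    · rw [h]
  exact htNM.trans (hMmin E ⟨hE, hCE⟩)
end
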